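/- For a (n-1)-times continuously differentiable function f and real points a_1, ..., a_n (n ≥ 2), the Hermite–Genocchi formula holds: the divided difference f[a_1, ..., a_n] equals ∫_{S_{n-1}} f^{(n-1)}(t_1 a_1 + ... + t_n a_n) dt_1 ... dt_{n-1}, where S_{n-1} = {(t_1,...,t_{n-1}) ∈ ℝ_{≥0}^{n-1} : ∑ t_i ≤ 1} and t_n = 1 - ∑_{i=1}^{n-1} t_i. -/

import Mathlib

/-!
Induction on `n`. For nodes `a 0, …, a (n+1)`, slice the simplex along its last coordinate,
`t = (t', s)` with `0 ≤ s ≤ 1 - ∑ t'`. On each fibre the integrand `f⁽ⁿ⁺¹⁾` is evaluated along a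
segment with velocity `a n - a (n+1)`, running from the facet opposite `a n` to the facet opposite
`a (n+1)`, so by the fundamental theorem of calculus the integral is the difference of the two
facet integrals of `f⁽ⁿ⁾` divided by `a n - a (n+1)`. By induction these are the divided
differences on the two facets, and the recursion for divided differences closes the step.
-/

open MeasureTheory

/-- Divided difference of `f` at (pairwise distinct) points `x 0, …, x (m-1)`,
in Lagrange polynomial form (equivalent to the recursive definition for
pairwise distinct points). -/
noncomputable def divDiff {m : ℕ} (f : ℝ → ℝ) (x : Fin m → ℝ) : ℝ :=
  ∑ j, f (x j) / ∏ k ∈ Finset.univ.erase j, (x j - x k)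

open Set

theorem Fin.prod_erase_succAbove {M : Type*} [CommMonoid M] {m : ℕ} (g : Fin (m + 1) → M)
    (q : Fin (m + 1)) (j : Fin m) :
    ∏ k ∈ Finset.univ.erase (q.succAbove j), g k =
      g q * ∏ k ∈ Finset.univ.erase j, g (q.succAbove k) := by
  have hq : q ∈ Finset.univ.erase (q.succAbove j) :=
    Finset.mem_erase.2 ⟨(q.succAbove_ne j).symm, Finset.mem_univ q⟩
  rw [← Finset.mul_prod_erase _ _ hq, Finset.erase_right_comm, ← Finset.compl_singleton,
    ← Fin.image_succAbove_univ, ← Finset.image_erase Fin.succAbove_right_injective,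
    Finset.prod_image fun _ _ _ _ h => Fin.succAbove_right_injective h]

theorem divDiff_comp_succAbove (f : ℝ → ℝ) {m : ℕ} {y : Fin (m + 1) → ℝ}
    (hy : Function.Injective y) (q : Fin (m + 1)) :
    divDiff f (y ∘ q.succAbove) =
      ∑ j, f (y j) * (y j - y q) / ∏ k ∈ Finset.univ.erase j, (y j - y k) := by
  rw [Fin.sum_univ_succAbove _ q, sub_self, mul_zero, zero_div, zero_add, divDiff]
  refine Finset.sum_congr rfl fun j _ => ?_
  have hq : y (q.succAbove j) - y q ≠ 0 := sub_ne_zero.2 (hy.ne (q.succAbove_ne j))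
  rw [Fin.prod_erase_succAbove (fun k => y (q.succAbove j) - y k), mul_comm (f _),
    mul_div_mul_left _ _ hq]
  rfl

theorem divDiff_succAbove_sub_succAbove (f : ℝ → ℝ) {m : ℕ} {y : Fin (m + 1) → ℝ}
    (hy : Function.Injective y) (p q : Fin (m + 1)) :
    divDiff f (y ∘ q.succAbove) - divDiff f (y ∘ p.succAbove) = (y p - y q) * divDiff f y := by
  rw [divDiff_comp_succAbove f hy, divDiff_comp_succAbove f hy, divDiff, Finset.mul_sum,
    ← Finset.sum_sub_distrib]
  exact Finset.sum_congr rfl fun j _ => by ring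

def cornerSimplex (ι : Type*) [Fintype ι] : Set (ι → ℝ) := {t | (∀ i, 0 ≤ t i) ∧ ∑ i, t i ≤ 1}

section cornerSimplex

variable {ι : Type*} [Fintype ι]

theorem isClosed_cornerSimplex : IsClosed (cornerSimplex ι) :=
  show IsClosed (Ici 0 ∩ {t : ι → ℝ | ∑ i, t i ≤ 1}) from
    isClosed_Ici.inter (isClosed_le (by fun_prop) continuous_const)

theorem cornerSimplex_subset_Icc : cornerSimplex ι ⊆ Icc 0 1 := fun _ ht =>
  ⟨ht.1, fun i => (Finset.single_le_sum (fun j _ => ht.1 j) (Finset.mem_univ i)).trans ht.2⟩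

theorem isCompact_cornerSimplex : IsCompact (cornerSimplex ι) :=
  isCompact_Icc.of_isClosed_subset isClosed_cornerSimplex cornerSimplex_subset_Icc

theorem measurableSet_cornerSimplex : MeasurableSet (cornerSimplex ι) :=
  isClosed_cornerSimplex.measurableSet

end cornerSimplex

theorem Fin.snoc_mem_cornerSimplex_iff {n : ℕ} (t : Fin n → ℝ) (s : ℝ) :
    (Fin.snoc t s : Fin (n + 1) → ℝ) ∈ cornerSimplex (Fin (n + 1)) ↔
      t ∈ cornerSimplex (Fin n) ∧ s ∈ Icc 0 (1 - ∑ i, t i) := by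
  simp only [cornerSimplex, mem_ofPred_eq, Fin.forall_fin_succ', Fin.snoc_castSucc, Fin.snoc_last,
    Fin.sum_univ_castSucc, mem_Icc]
  constructor
  · rintro ⟨⟨ht, hs⟩, hsum⟩
    exact ⟨⟨ht, by linarith⟩, hs, by linarith⟩
  · rintro ⟨⟨ht, -⟩, hs, hsum⟩
    exact ⟨⟨ht, hs⟩, by linarith⟩

section slicing

variable {E : Type*} [NormedAddCommGroup E] [NormedSpace ℝ E]

theorem integral_eq_integral_integral_snoc {n : ℕ} {F : (Fin (n + 1) → ℝ) → E}
    (hF : Integrable F) : ∫ t, F t = ∫ t : Fin n → ℝ, ∫ s : ℝ, F (Fin.snoc t s) := by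
  have e := (volume_preserving_piFinSuccAbove (fun _ : Fin (n + 1) => ℝ) (Fin.last n)).symm
  rw [← e.integral_comp', Measure.volume_eq_prod, integral_prod_symm]
  · simp [MeasurableEquiv.piFinSuccAbove, Fin.snocEquiv]
  · rw [← Measure.volume_eq_prod]
    exact e.integrable_comp_emb (MeasurableEquiv.measurableEmbedding _) |>.2 hF

theorem setIntegral_cornerSimplex_succ {n : ℕ} {F : (Fin (n + 1) → ℝ) → E}
    (hF : IntegrableOn F (cornerSimplex (Fin (n + 1)))) :
    ∫ t in cornerSimplex (Fin (n + 1)), F t =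
      ∫ t in cornerSimplex (Fin n), ∫ s in 0..1 - ∑ i, t i, F (Fin.snoc t s) := by
  rw [← integral_indicator measurableSet_cornerSimplex,
    integral_eq_integral_integral_snoc (hF.integrable_indicator measurableSet_cornerSimplex),
    ← integral_indicator measurableSet_cornerSimplex]
  congr 1
  ext t
  by_cases ht : t ∈ cornerSimplex (Fin n)
  · rw [indicator_of_mem ht, intervalIntegral.integral_of_le (by linarith [ht.2]),
      ← integral_Icc_eq_integral_Ioc, ← integral_indicator measurableSet_Icc]
    congr 1
    ext s
    simp only [indicator, Fin.snoc_mem_cornerSimplex_iff, ht, true_and]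
  · simp [indicator, Fin.snoc_mem_cornerSimplex_iff, ht]

end slicing

theorem intervalIntegral_comp_add_mul_of_hasDerivAt {G g : ℝ → ℝ}
    (hG : ∀ x, HasDerivAt G (g x) x) (hg : Continuous g) {d : ℝ} (hd : d ≠ 0) (c b : ℝ) :
    ∫ s in 0..b, g (c + d * s) = (G (c + d * b) - G c) / d := by
  rw [intervalIntegral.integral_comp_add_mul _ hd,
    intervalIntegral.integral_eq_sub_of_hasDerivAt (fun x _ => hG x) (hg.intervalIntegrable _ _),
    mul_zero, add_zero, smul_eq_mul, inv_mul_eq_div]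

def simplexMap {n : ℕ} (a : Fin (n + 1) → ℝ) (t : Fin n → ℝ) : ℝ :=
  ∑ i, t i * a i.castSucc + (1 - ∑ i, t i) * a (Fin.last n)

theorem continuous_simplexMap {n : ℕ} (a : Fin (n + 1) → ℝ) : Continuous (simplexMap a) := by
  unfold simplexMap
  fun_prop

section snoc

variable {n : ℕ} (a : Fin (n + 2) → ℝ) (t : Fin n → ℝ)

theorem simplexMap_snoc (s : ℝ) :
    simplexMap a (Fin.snoc t s) =
      simplexMap (a ∘ (Fin.last n).castSucc.succAbove) t +
        (a (Fin.last n).castSucc - a (Fin.last (n + 1))) * s := by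
  simp only [simplexMap, Fin.sum_univ_castSucc, Fin.snoc_castSucc, Fin.snoc_last,
    Function.comp_apply, Fin.succAbove_castSucc_of_lt _ _ (Fin.castSucc_lt_last _),
    Fin.succAbove_castSucc_self, Fin.succ_last]
  ring

theorem simplexMap_snoc_one_sub_sum :
    simplexMap a (Fin.snoc t (1 - ∑ i, t i)) = simplexMap (a ∘ Fin.castSucc) t := by
  simp only [simplexMap, Fin.sum_univ_castSucc, Fin.snoc_castSucc, Fin.snoc_last,
    Function.comp_apply]
  ring

end snoc

theorem setIntegral_iteratedDeriv_succ_simplexMap {n : ℕ} {f : ℝ → ℝ} (hf : ContDiff ℝ (n + 1) f)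
    {a : Fin (n + 2) → ℝ} (ha : a (Fin.last n).castSucc ≠ a (Fin.last (n + 1))) :
    ∫ t in cornerSimplex (Fin (n + 1)), iteratedDeriv (n + 1) f (simplexMap a t) =
      ((∫ t in cornerSimplex (Fin n), iteratedDeriv n f (simplexMap (a ∘ Fin.castSucc) t)) -
        ∫ t in cornerSimplex (Fin n),
          iteratedDeriv n f (simplexMap (a ∘ (Fin.last n).castSucc.succAbove) t)) /
        (a (Fin.last n).castSucc - a (Fin.last (n + 1))) := by
  have hcont (k : ℕ) (hk : k ≤ n + 1) (b : Fin (k + 1) → ℝ) :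
      IntegrableOn (fun t => iteratedDeriv k f (simplexMap b t)) (cornerSimplex (Fin k)) :=
    ((hf.continuous_iteratedDeriv k (by exact_mod_cast hk)).comp
      (continuous_simplexMap b)).continuousOn.integrableOn_compact isCompact_cornerSimplex
  have hderiv (x : ℝ) : HasDerivAt (iteratedDeriv n f) (iteratedDeriv (n + 1) f x) x := by
    rw [iteratedDeriv_succ]
    exact (hf.differentiable_iteratedDeriv n (by exact_mod_cast n.lt_succ_self) x).hasDerivAt
  rw [setIntegral_cornerSimplex_succ (hcont (n + 1) le_rfl a),
    ← integral_sub (hcont n n.le_succ _) (hcont n n.le_succ _), ← integral_div]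
  congr 1
  ext t
  simp only [simplexMap_snoc]
  rw [intervalIntegral_comp_add_mul_of_hasDerivAt hderiv
    (hf.continuous_iteratedDeriv _ le_rfl) (sub_ne_zero.2 ha),
    ← simplexMap_snoc, simplexMap_snoc_one_sub_sum]

theorem divDiff_eq_setIntegral_cornerSimplex {n : ℕ} {f : ℝ → ℝ} (hf : ContDiff ℝ n f)
    {a : Fin (n + 1) → ℝ} (ha : Function.Injective a) :
    divDiff f a = ∫ t in cornerSimplex (Fin n), iteratedDeriv n f (simplexMap a t) := by
  induction n with
  | zero => simp [divDiff, simplexMap, cornerSimplex, measureReal_def, volume_pi]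
  | succ n ih =>
    have hfn : ContDiff ℝ n f := hf.of_le (by exact_mod_cast n.le_succ)
    have hpq : a (Fin.last n).castSucc - a (Fin.last (n + 1)) ≠ 0 :=
      sub_ne_zero.2 (ha.ne (Fin.castSucc_lt_last _).ne)
    rw [setIntegral_iteratedDeriv_succ_simplexMap hf (sub_ne_zero.1 hpq),
      ← ih hfn (ha.comp (Fin.castSucc_injective _)),
      ← ih hfn (ha.comp Fin.succAbove_right_injective), eq_div_iff hpq, ← Fin.succAbove_last,
      divDiff_succAbove_sub_succAbove f ha, mul_comm]

theorem hermite_genocchi_general (n : ℕ) (f : ℝ → ℝ) (hf : ContDiff ℝ (n : ℕ) f)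
    (a : Fin (n + 1) → ℝ) (ha : Function.Injective a) :
    divDiff f a =
      ∫ t in {t : Fin n → ℝ | (∀ i, 0 ≤ t i) ∧ ∑ i, t i ≤ 1},
        iteratedDeriv n f ((∑ i, t i * a i.castSucc) + (1 - ∑ i, t i) * a (Fin.last n)) :=
  divDiff_eq_setIntegral_cornerSimplex hf ha

theorem hermite_genocchi (n : ℕ) (hn : 1 ≤ n) (f : ℝ → ℝ) (hf : ContDiff ℝ (n : ℕ) f)
    (a : Fin (n + 1) → ℝ) (ha : Function.Injective a) :
    divDiff f a =
      ∫ t in {t : Fin n → ℝ | (∀ i, 0 ≤ t i) ∧ ∑ i, t i ≤ 1},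
        iteratedDeriv n f ((∑ i, t i * a i.castSucc) + (1 - ∑ i, t i) * a (Fin.last n)) :=
  hermite_genocchi_general n f hf a ha
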